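/- arXiv:0903.3499 — 2 statements merged into one kernel-verified Lean document; each statement's English description precedes it below -/
import Mathlib

section
/- Let 0 < δ < 1 and let ρ ∈ (0,σ) be chosen so that ν_{a,σ}(cap(a,ρ)) = δ. Then for every Borel set B ⊆ cap(a,σ) with 0 < ν_{a,σ}(B) ≤ δ, one has μ(B) ≤ μ(cap(a,ρ)); i.e., among all measurable sets of ν_{a,σ}-measure at most δ, the cap cap(a,ρ) maximizes μ. -/
open MeasureTheory Filter
open scoped RealInnerProductSpace ENNReal

/-!
Bathtub principle: the density `f(z) = g(sin θ(z, a))` of `μ` is at least `g(ρ)` on `cap(a, ρ)`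
(away from the null set `{a}`) and at most `g(ρ)` on the rest of `cap(a, σ)`, because `g` is
decreasing. Since `ν(B \ cap(a, ρ)) ≤ ν(cap(a, ρ) \ B)`, trading the part of `B` outside the cap
for the part of the cap outside `B` can only increase `μ`.
-/

/-- `I_m(σ) := ∫₀^σ r^{m-1} / √(1 - r²) dr`. -/
noncomputable def Ifun (m σ : ℝ) : ℝ :=
  ∫ r in (0:ℝ)..σ, r ^ (m - 1) / Real.sqrt (1 - r ^ 2)

/-- The spherical cap `{z ∈ Sⁿ : ⟨z,a⟩ > √(1-ρ²)}` in `Sⁿ ⊆ ℝ^{n+1}`. -/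
noncomputable def cap (n : ℕ) (a : EuclideanSpace ℝ (Fin (n + 1))) (ρ : ℝ) :
    Set (EuclideanSpace ℝ (Fin (n + 1))) :=
  {z | z ∈ Metric.sphere (0 : EuclideanSpace ℝ (Fin (n + 1))) 1 ∧
       Real.sqrt (1 - ρ ^ 2) < ⟪z, a⟫}

/-- `ν_{a,σ}`: the uniform probability measure on `cap(a,σ)`, i.e. the normalized
`n`-dimensional Hausdorff (surface) measure restricted to `cap(a,σ)`. -/
noncomputable def nuMeasure (n : ℕ) (a : EuclideanSpace ℝ (Fin (n + 1))) (σ : ℝ) :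
    Measure (EuclideanSpace ℝ (Fin (n + 1))) :=
  (μH[(n : ℝ)] (cap n a σ))⁻¹ • (μH[(n : ℝ)]).restrict (cap n a σ)

/-- `g(r) = C_{β,σ} · r^{-β} · h(r)` with `C_{β,σ} = I_n(σ)/I_{n-β}(σ)`. -/
noncomputable def gFun (n : ℕ) (σ β : ℝ) (h : ℝ → ℝ) (r : ℝ) : ℝ :=
  (Ifun n σ / Ifun ((n : ℝ) - β) σ) * r ^ (-β) * h r

/-- The adversarial measure: the density of `μ` with respect to `ν_{a,σ}` at `z` is
`f(z) = g(sin θ(z,a))`, where `sin θ(z,a) = √(1 - ⟨z,a⟩²)` for unit vectors `z, a`. -/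
noncomputable def advMeasure (n : ℕ) (a : EuclideanSpace ℝ (Fin (n + 1))) (σ β : ℝ)
    (h : ℝ → ℝ) : Measure (EuclideanSpace ℝ (Fin (n + 1))) :=
  (nuMeasure n a σ).withDensity
    (fun z => ENNReal.ofReal (gFun n σ β h (Real.sqrt (1 - ⟪z, a⟫ ^ 2))))

section Bathtub

variable {α : Type*} [MeasurableSpace α] {ν : Measure α} {f : α → ℝ≥0∞} {B C : Set α}

theorem setLIntegral_le_setLIntegral_of_bathtub (hB : MeasurableSet B) (hC : MeasurableSet C)
    (hBC : ν B ≤ ν C) (hC_fin : ν C ≠ ∞) (c : ℝ≥0∞)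
    (h_out : ∀ᵐ z ∂ν, z ∉ C → f z ≤ c) (h_in : ∀ᵐ z ∂ν, z ∈ C → c ≤ f z) :
    ∫⁻ z in B, f z ∂ν ≤ ∫⁻ z in C, f z ∂ν := by
  have h_fin : ν (B ∩ C) ≠ ∞ := measure_ne_top_of_subset Set.inter_subset_right hC_fin
  have h_diff : ν (B \ C) ≤ ν (C \ B) := by
    refine (ENNReal.add_le_add_iff_right h_fin).mp ?_
    rw [measure_sdiff_add_inter B hC, Set.inter_comm, measure_sdiff_add_inter C hB]
    exact hBC
  have h_le_out : ∫⁻ z in B \ C, f z ∂ν ≤ c * ν (B \ C) := by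
    rw [← setLIntegral_const]
    exact setLIntegral_mono_ae aemeasurable_const (h_out.mono fun z hz hzBC => hz hzBC.2)
  have h_in_le : c * ν (C \ B) ≤ ∫⁻ z in C \ B, f z ∂ν := by
    rw [← setLIntegral_const]
    exact setLIntegral_mono_ae' (hC.diff hB) (h_in.mono fun z hz hzCB => hz hzCB.1)
  calc ∫⁻ z in B, f z ∂ν
      = ∫⁻ z in B ∩ C, f z ∂ν + ∫⁻ z in B \ C, f z ∂ν := (lintegral_inter_add_sdiff f B hC).symm
    _ ≤ ∫⁻ z in C ∩ B, f z ∂ν + ∫⁻ z in C \ B, f z ∂ν := by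
        rw [Set.inter_comm]
        exact add_le_add le_rfl (h_le_out.trans ((mul_le_mul_right h_diff c).trans h_in_le))
    _ = ∫⁻ z in C, f z ∂ν := lintegral_inter_add_sdiff f C hB

end Bathtub

section Cap

variable {n : ℕ} {a z : EuclideanSpace ℝ (Fin (n + 1))} {ρ σ : ℝ}

theorem measurableSet_cap (n : ℕ) (a : EuclideanSpace ℝ (Fin (n + 1))) (ρ : ℝ) :
    MeasurableSet (cap n a ρ) :=
  show MeasurableSet (Metric.sphere 0 1 ∩ {z | √(1 - ρ ^ 2) < ⟪z, a⟫}) from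
    Metric.isClosed_sphere.measurableSet.inter (measurableSet_lt measurable_const (by fun_prop))

theorem mem_cap_iff :
    z ∈ cap n a ρ ↔ ‖z‖ = 1 ∧ 0 < ⟪z, a⟫ ∧ 1 - ρ ^ 2 < ⟪z, a⟫ ^ 2 := by
  rw [cap, Set.mem_ofPred_eq, mem_sphere_zero_iff_norm]
  refine and_congr_right fun _ => ⟨fun h => ?_, fun h => (Real.sqrt_lt' h.1).mpr h.2⟩
  have hpos : 0 < ⟪z, a⟫ := (Real.sqrt_nonneg _).trans_lt h
  exact ⟨hpos, (Real.sqrt_lt' hpos).mp h⟩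

theorem sqrt_one_sub_inner_sq_mem_Icc_of_mem_cap_diff (hρ : 0 ≤ ρ) (hσ : 0 ≤ σ)
    (hz : z ∈ cap n a σ \ cap n a ρ) : √(1 - ⟪z, a⟫ ^ 2) ∈ Set.Icc ρ σ := by
  obtain ⟨hzσ, hzρ⟩ := hz
  rw [mem_cap_iff] at hzσ hzρ
  obtain ⟨hz1, hpos, hσlt⟩ := hzσ
  have hle : ⟪z, a⟫ ^ 2 ≤ 1 - ρ ^ 2 := by
    by_contra! hlt
    exact hzρ ⟨hz1, hpos, hlt⟩
  exact ⟨(Real.le_sqrt hρ (by nlinarith)).mpr (by linarith),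
    Real.sqrt_le_iff.mpr ⟨hσ, by linarith⟩⟩

theorem sqrt_one_sub_inner_sq_mem_Ioc_of_mem_cap (ha : ‖a‖ = 1) (hρ : 0 ≤ ρ)
    (hz : z ∈ cap n a ρ) (hza : z ≠ a) : √(1 - ⟪z, a⟫ ^ 2) ∈ Set.Ioc 0 ρ := by
  obtain ⟨hz1, hpos, hρlt⟩ := mem_cap_iff.mp hz
  have hle : ⟪z, a⟫ ≤ 1 := (real_inner_le_norm z a).trans_eq (by rw [hz1, ha, one_mul])
  have hlt : ⟪z, a⟫ < 1 :=
    hle.lt_of_ne fun h => hza ((inner_eq_one_iff_of_norm_eq_one hz1 ha).mp h)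
  exact ⟨Real.sqrt_pos.mpr (by nlinarith), Real.sqrt_le_iff.mpr ⟨hρ, by linarith⟩⟩

theorem ae_nuMeasure_mem_cap_ne (hn : 1 ≤ n) (a : EuclideanSpace ℝ (Fin (n + 1))) (σ : ℝ) :
    ∀ᵐ z ∂nuMeasure n a σ, z ∈ cap n a σ ∧ z ≠ a := by
  have : NullSingletonClass (μH[(n : ℝ)] : Measure (EuclideanSpace ℝ (Fin (n + 1)))) :=
    Measure.nullSingletonClass_hausdorff _ (by exact_mod_cast hn)
  refine Measure.ae_smul_measure ?_ _
  filter_upwards [ae_restrict_mem (measurableSet_cap n a σ),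
    ae_restrict_of_ae (Measure.ae_ne _ a)] with z hzσ hza
  exact ⟨hzσ, hza⟩

end Cap

theorem stmt8_general (n : ℕ) (hn : 1 ≤ n)
    (a : EuclideanSpace ℝ (Fin (n + 1)))
    (ha : a ∈ Metric.sphere (0 : EuclideanSpace ℝ (Fin (n + 1))) 1)
    (σ : ℝ)
    (β : ℝ)
    (h : ℝ → ℝ)
    (hmono : AntitoneOn (gFun n σ β h) (Set.Ioc 0 σ))
    (δ : ℝ)
    (ρ : ℝ) (hρ : ρ ∈ Set.Ioo (0:ℝ) σ)
    (hρδ : nuMeasure n a σ (cap n a ρ) = ENNReal.ofReal δ)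
    (B : Set (EuclideanSpace ℝ (Fin (n + 1)))) (hB : MeasurableSet B)
    (hBδ : nuMeasure n a σ B ≤ ENNReal.ofReal δ) :
    advMeasure n a σ β h B ≤ advMeasure n a σ β h (cap n a ρ) := by
  have ha1 : ‖a‖ = 1 := mem_sphere_zero_iff_norm.mp ha
  have hρσ : ρ ∈ Set.Ioc 0 σ := ⟨hρ.1, hρ.2.le⟩
  rw [advMeasure, withDensity_apply _ hB, withDensity_apply _ (measurableSet_cap n a ρ)]
  refine setLIntegral_le_setLIntegral_of_bathtub hB (measurableSet_cap n a ρ)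
    (hBδ.trans hρδ.ge) (hρδ ▸ ENNReal.ofReal_ne_top) (ENNReal.ofReal (gFun n σ β h ρ)) ?_ ?_
  · filter_upwards [ae_nuMeasure_mem_cap_ne hn a σ] with z hz hzρ
    have hsin := sqrt_one_sub_inner_sq_mem_Icc_of_mem_cap_diff hρ.1.le (hρ.1.trans hρ.2).le
      ⟨hz.1, hzρ⟩
    exact ENNReal.ofReal_le_ofReal (hmono hρσ ⟨hρ.1.trans_le hsin.1, hsin.2⟩ hsin.1)
  -- Excluding the centre `a` keeps `sin θ(z, a)` off `0`, where `hmono` says nothing.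
  · filter_upwards [ae_nuMeasure_mem_cap_ne hn a σ] with z hz hzρ
    have hsin := sqrt_one_sub_inner_sq_mem_Ioc_of_mem_cap ha1 hρ.1.le hzρ hz.2
    exact ENNReal.ofReal_le_ofReal (hmono ⟨hsin.1, hsin.2.trans hρ.2.le⟩ hρσ hsin.2)

/-- Among all measurable sets `B ⊆ cap(a,σ)` of `ν_{a,σ}`-measure at most
`δ = ν_{a,σ}(cap(a,ρ))`, the cap `cap(a,ρ)` maximizes the adversarial measure `μ`. -/
theorem stmt8 (n : ℕ) (hn : 1 ≤ n)
    (a : EuclideanSpace ℝ (Fin (n + 1)))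
    (ha : a ∈ Metric.sphere (0 : EuclideanSpace ℝ (Fin (n + 1))) 1)
    (σ : ℝ) (hσ : σ ∈ Set.Ioc (0:ℝ) 1)
    (β : ℝ) (hβ0 : 0 ≤ β) (hβn : β < n)
    (h : ℝ → ℝ) (hcont : ContinuousOn h (Set.Icc 0 σ))
    (hpos : ∀ r ∈ Set.Icc (0:ℝ) σ, 0 < h r)
    (hint : (∫ r in (0:ℝ)..σ, h r * (r ^ ((n : ℝ) - β - 1) / Real.sqrt (1 - r ^ 2)))
      = Ifun ((n : ℝ) - β) σ)
    (hmono : AntitoneOn (gFun n σ β h) (Set.Ioc 0 σ))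
    (δ : ℝ) (hδ : δ ∈ Set.Ioo (0:ℝ) 1)
    (ρ : ℝ) (hρ : ρ ∈ Set.Ioo (0:ℝ) σ)
    (hρδ : nuMeasure n a σ (cap n a ρ) = ENNReal.ofReal δ)
    (B : Set (EuclideanSpace ℝ (Fin (n + 1)))) (hB : MeasurableSet B)
    (hBsub : B ⊆ cap n a σ)
    (hB0 : 0 < nuMeasure n a σ B) (hBδ : nuMeasure n a σ B ≤ ENNReal.ofReal δ) :
    advMeasure n a σ β h B ≤ advMeasure n a σ β h (cap n a ρ) :=
  stmt8_general n hn a ha σ β h hmono δ ρ hρ hρδ B hB hBδ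
end

section
/- For every integer n ≥ 1, (1 - (2/(πn))^{1/n})^{-1/2} ≤ √(2n / ln(πn/2)). -/
/-- For every integer `n ≥ 1`, `(1 - (2/(πn))^{1/n})^{-1/2} ≤ √(2n / ln(πn/2))`. -/
theorem stmt15 (n : ℕ) (hn : 1 ≤ n) :
    (1 - (2 / (Real.pi * n)) ^ ((n : ℝ)⁻¹)) ^ (-(1 : ℝ) / 2) ≤
      Real.sqrt (2 * n / Real.log (Real.pi * n / 2)) := by
  have hn1 : (1:ℝ) ≤ n := by exact_mod_cast hn
  have hn0 : (0:ℝ) < n := lt_of_lt_of_le one_pos hn1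
  have hpi := Real.pi_gt_three
  have hA : (1:ℝ) < Real.pi * n / 2 := by nlinarith
  have hL0 : 0 < Real.log (Real.pi * n / 2) := Real.log_pos hA
  set t := Real.log (Real.pi * n / 2) / n with htdef
  have ht0 : 0 < t := div_pos hL0 hn0
  have ht1 : t ≤ 1 := by
    rw [htdef, div_le_one hn0]
    have h1 : Real.log (Real.pi * n / 2) = Real.log (Real.pi / 2) + Real.log n := by
      rw [← Real.log_mul (by positivity) (by positivity)]
      ring_nf
    have h2 : Real.log (Real.pi / 2) ≤ Real.pi / 2 - 1 :=
      Real.log_le_sub_one_of_pos (by positivity)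
    have h3 : Real.log n ≤ (n : ℝ) - 1 := Real.log_le_sub_one_of_pos hn0
    have hpi4 := Real.pi_lt_d2
    nlinarith
  have hbase : (2 / (Real.pi * n)) ^ ((n : ℝ)⁻¹) = Real.exp (-t) := by
    rw [Real.rpow_def_of_pos (by positivity)]
    congr 1
    have h : (2 / (Real.pi * n)) = (Real.pi * n / 2)⁻¹ := by
      field_simp
    rw [h, Real.log_inv, htdef]
    ring
  rw [hbase]
  have hexp : Real.exp (-t) ≤ 1 - t / 2 := by
    have h1 : 1 + t ≤ Real.exp t := by
      have := Real.add_one_le_exp t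
      linarith
    have hE : (0:ℝ) < Real.exp t := Real.exp_pos t
    rw [Real.exp_neg]
    have h3 : (Real.exp t)⁻¹ * Real.exp t = 1 := inv_mul_cancel₀ hE.ne'
    nlinarith [mul_le_mul_of_nonneg_left h1 (by linarith : (0:ℝ) ≤ 1 - t / 2),
      inv_pos.mpr hE]
  have hu0 : 0 < 1 - Real.exp (-t) := by
    have : Real.exp (-t) < 1 := by
      rw [Real.exp_lt_one_iff]; linarith
    linarith
  have hut : t / 2 ≤ 1 - Real.exp (-t) := by linarith
  have hrhs : 2 * (n : ℝ) / Real.log (Real.pi * n / 2) = 2 / t := by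
    rw [htdef]
    field_simp
  rw [hrhs]
  have hl : (1 - Real.exp (-t)) ^ (-(1:ℝ) / 2) = Real.sqrt ((1 - Real.exp (-t))⁻¹) := by
    rw [neg_div, Real.rpow_neg hu0.le, ← Real.sqrt_eq_rpow, Real.sqrt_inv]
  rw [hl]
  apply Real.sqrt_le_sqrt
  have h2t : (2:ℝ) / t = (t / 2)⁻¹ := by
    rw [div_eq_mul_inv, div_eq_mul_inv]
    rw [mul_inv, inv_inv]
    ring
  rw [h2t]
  exact inv_anti₀ (by linarith) hut
end
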